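/- arXiv:0904.0616 — 4 statements merged into one kernel-verified Lean document; each statement's English description precedes it below -/
import Mathlib

section
/- Let p, q be integers with p even and Δ = p² + 4q positive and not a perfect square, and set n = Δ/4 (an integer). Then the sum of the partial quotients over one least period of the continued fraction of frac(x₊(p,q)) satisfies Σ_{i=1}^{T(p,q)} a_i(frac(x₊(p,q))) ≤ 2·Σ_{u=1}^{⌊√n⌋} τ(n − u²) + τ(n). (Lemma 3, case of even p.) -/
/-!
Write `p = 2m` and `n = m² + q`, so that `x₊(p, q) = √n - m` and `frac x₊ = frac √n`.
The Gauss-map orbit of `frac √n` consists of numbers `Q / (√n + P)` with `(P, Q)` reduced,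
`0 < √n - P < Q < √n + P` and `Q ∣ n - P²`, and the partial quotient there is
`a = ⌊(√n + P) / Q⌋`. The step `(P, Q) ↦ (aQ - P, (n - (aQ - P)²) / Q)` is injective on reduced
pairs, so the pairs met during one least period are distinct. A reduced pair contributes the `a`
integers `u = kQ - P`, `1 ≤ k ≤ a`, which satisfy `|u| < √n` and `Q ∣ n - u²`; the pairs
`(u, Q)` obtained this way are pairwise distinct, so their number, the sum of the partial
quotients over the period, is at most `Σ_{|u| ≤ ⌊√n⌋} τ(n - u²)`, which is the claimed bound
after pairing `u` with `-u`.
-/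

open MeasureTheory Filter Set

/-- The Gauss map `y ↦ frac (1/y)`. -/
noncomputable def gaussMap : ℝ → ℝ := fun y => Int.fract (1 / y)

/-- The `i`-th partial quotient of the continued fraction of `x` (for `i ≥ 1`):
`a_i(x) = ⌊1 / G^[i-1](x)⌋`. -/
noncomputable def cfDigit (i : ℕ) (x : ℝ) : ℤ := ⌊1 / (gaussMap^[i - 1] x)⌋

/-- The larger root `x₊(p,q) = (√(p² + 4q) − p)/2` of `x² + p x = q`. -/
noncomputable def xPlus (p q : ℤ) : ℝ := (Real.sqrt ((p : ℝ) ^ 2 + 4 * (q : ℝ)) - (p : ℝ)) / 2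

/-- `Ω_R`: the integer points `(p,q)` with `p² + q² ≤ R²`, `p² + 4q > 0`,
and `p² + 4q` not a perfect square. -/
def OmegaSet (R : ℝ) : Set (ℤ × ℤ) :=
  {pq | (pq.1 : ℝ) ^ 2 + (pq.2 : ℝ) ^ 2 ≤ R ^ 2 ∧ 0 < pq.1 ^ 2 + 4 * pq.2 ∧
    ¬ IsSquare (pq.1 ^ 2 + 4 * pq.2)}

/-- `P_i(k)`: the Lebesgue measure of `{x ∈ (0,1) : x irrational, a_i(x) = k}`. -/
noncomputable def gkProb (i : ℕ) (k : ℕ) : ℝ :=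
  (volume {x : ℝ | x ∈ Set.Ioo (0 : ℝ) 1 ∧ Irrational x ∧ cfDigit i x = (k : ℤ)}).toReal

/-- `T(p,q)`: the least period of the (purely periodic) sequence of partial quotients
of `frac (x₊(p,q))`. -/
noncomputable def period (p q : ℤ) : ℕ :=
  sInf {T : ℕ | 1 ≤ T ∧ ∀ i : ℕ, 1 ≤ i →
    cfDigit (i + T) (Int.fract (xPlus p q)) = cfDigit i (Int.fract (xPlus p q))}

/-- The sum `Σ_{i=1}^{T(p,q)} a_i(frac (x₊(p,q)))` of the partial quotients
over one least period. -/
noncomputable def periodSum (p q : ℤ) : ℤ :=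
  ∑ i ∈ Finset.Icc 1 (period p q), cfDigit i (Int.fract (xPlus p q))

def IsDigitPeriod (x : ℝ) (d : ℕ) : Prop := ∀ i, 1 ≤ i → cfDigit (i + d) x = cfDigit i x

lemma dvd_sub_sq_mul_sub {m P Q : ℤ} (h : Q ∣ m - P ^ 2) (k : ℤ) :
    Q ∣ m - (k * Q - P) ^ 2 := by
  rw [show m - (k * Q - P) ^ 2 = m - P ^ 2 - Q * (k ^ 2 * Q - 2 * k * P) by ring]
  exact h.sub (dvd_mul_right _ _)

lemma abs_le_nat_sqrt_of_sq_le {n : ℕ} {u : ℤ} (h : u ^ 2 ≤ n) : |u| ≤ Nat.sqrt n := by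
  rw [Int.abs_eq_natAbs, Nat.cast_le, Nat.le_sqrt']
  rw [← Int.natAbs_pow_two] at h
  exact_mod_cast h

theorem Function.Even.sum_Icc_neg {M : Type*} [AddCommMonoid M] {f : ℤ → M} (hf : f.Even) (A : ℕ) :
    ∑ u ∈ Finset.Icc (-(A : ℤ)) A, f u = 2 • ∑ u ∈ Finset.Icc 1 A, f u + f 0 := by
  induction A with
  | zero => simp
  | succ A ih =>
    have hIcc : Finset.Icc (-((A + 1 : ℕ) : ℤ)) (A + 1 : ℕ) =
        insert (-(A + 1 : ℤ)) (insert (A + 1 : ℤ) (Finset.Icc (-(A : ℤ)) A)) := by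
      ext; simp only [Finset.mem_Icc, Finset.mem_insert]; omega
    rw [hIcc, Finset.sum_insert (by simp only [Finset.mem_insert, Finset.mem_Icc]; omega),
      Finset.sum_insert (by simp only [Finset.mem_Icc]; omega), ih,
      Finset.sum_Icc_succ_top (by omega), hf]
    push_cast
    abel

namespace SqrtContFrac

/-- The pair `(P, Q)` stands for the complete quotient `(√n + P) / Q`; it is reduced when that
quotient exceeds `1` and its conjugate `(P - √n) / Q` lies in `(-1, 0)`. -/
structure IsReduced (n : ℕ) (s : ℤ × ℤ) : Prop where
  pos : 0 < s.2
  dvd : s.2 ∣ (n : ℤ) - s.1 ^ 2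
  lt_sqrt : (s.1 : ℝ) < √n
  sqrt_lt_add : √n < s.1 + s.2
  lt_sqrt_add : (s.2 : ℝ) < √n + s.1

noncomputable def digit (n : ℕ) (s : ℤ × ℤ) : ℤ := ⌊(√n + s.1) / s.2⌋

noncomputable def next (n : ℕ) (s : ℤ × ℤ) : ℤ × ℤ :=
  (digit n s * s.2 - s.1, ((n : ℤ) - (digit n s * s.2 - s.1) ^ 2) / s.2)

def init (n : ℕ) : ℤ × ℤ := (Nat.sqrt n, n - Nat.sqrt n ^ 2)

noncomputable def state (n i : ℕ) : ℤ × ℤ := (next n)^[i] (init n)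

section
variable {n : ℕ} {P Q : ℤ}

namespace IsReduced

lemma one_le_digit (h : IsReduced n (P, Q)) : 1 ≤ digit n (P, Q) := by
  have hQ : (0 : ℝ) < Q := by exact_mod_cast h.pos
  exact Int.le_floor.2 (by simpa using (one_le_div hQ).2 h.lt_sqrt_add.le)

lemma lt_digit_add_one_mul (h : IsReduced n (P, Q)) :
    √n + P < (digit n (P, Q) + 1) * Q := by
  have hQ : (0 : ℝ) < Q := by exact_mod_cast h.pos
  exact (div_lt_iff₀ hQ).1 (Int.lt_floor_add_one _)

lemma digit_mul_lt (hirr : Irrational √n) (h : IsReduced n (P, Q)) :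
    digit n (P, Q) * Q < √n + P := by
  have hQ : (0 : ℝ) < Q := by exact_mod_cast h.pos
  have hle : (digit n (P, Q) : ℝ) * Q ≤ √n + P := (le_div_iff₀ hQ).1 (Int.floor_le _)
  refine hle.lt_of_ne fun heq => hirr ⟨digit n (P, Q) * Q - P, ?_⟩
  push_cast
  linarith

lemma sq_mul_sub_lt (hirr : Irrational √n) (h : IsReduced n (P, Q)) {k : ℤ} (hk₁ : 1 ≤ k)
    (hk : k ≤ digit n (P, Q)) : (k * Q - P) ^ 2 < n := by
  have hQ : (0 : ℝ) < Q := by exact_mod_cast h.pos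
  have hk₁' : (1 : ℝ) ≤ k := by exact_mod_cast hk₁
  have hk' : (k : ℝ) ≤ digit n (P, Q) := by exact_mod_cast hk
  have hlo : -√n < k * Q - P := by have := h.lt_sqrt; simp only at this; nlinarith
  have hhi : (k * Q - P : ℝ) < √n := by nlinarith [h.digit_mul_lt hirr]
  have := sq_lt_sq' hlo hhi
  rw [Real.sq_sqrt n.cast_nonneg] at this
  exact_mod_cast this

lemma eq_of_dvd_sub {P₁ P₂ : ℤ} (h₁ : IsReduced n (P₁, Q)) (h₂ : IsReduced n (P₂, Q))
    (hdvd : Q ∣ P₁ - P₂) : P₁ = P₂ := by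
  have a₁ := h₁.lt_sqrt; have b₁ := h₁.sqrt_lt_add
  have a₂ := h₂.lt_sqrt; have b₂ := h₂.sqrt_lt_add
  simp only at a₁ a₂ b₁ b₂
  have hlt : |P₁ - P₂| < Q := abs_lt.2
    ⟨by exact_mod_cast (by linarith : (-Q : ℝ) < P₁ - P₂),
      by exact_mod_cast (by linarith : (P₁ - P₂ : ℝ) < Q)⟩
  exact sub_eq_zero.1 (Int.eq_zero_of_abs_lt_dvd hdvd hlt)

lemma mul_next_snd (h : IsReduced n (P, Q)) :
    Q * (next n (P, Q)).2 = n - (next n (P, Q)).1 ^ 2 :=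
  Int.mul_ediv_cancel' (dvd_sub_sq_mul_sub h.dvd _)

protected lemma next (hirr : Irrational √n) (h : IsReduced n (P, Q)) :
    IsReduced n (next n (P, Q)) := by
  have hQQ' := h.mul_next_snd
  have hP' : ((next n (P, Q)).1 : ℝ) = digit n (P, Q) * Q - P := by simp [next]
  set P' := (next n (P, Q)).1
  set Q' := (next n (P, Q)).2
  have hsq : P' ^ 2 < n := h.sq_mul_sub_lt hirr h.one_le_digit le_rfl
  have hQ'pos : 0 < Q' := pos_of_mul_pos_right (hQQ' ▸ sub_pos.2 hsq) h.pos.le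
  have hQQ'R : (Q : ℝ) * Q' = √n ^ 2 - P' ^ 2 := by
    rw [Real.sq_sqrt n.cast_nonneg]; exact_mod_cast hQQ'
  have ha : (1 : ℝ) ≤ digit n (P, Q) := by exact_mod_cast h.one_le_digit
  have hlt := h.lt_sqrt
  have hup := h.lt_digit_add_one_mul
  have hdm := h.digit_mul_lt hirr
  simp only at hlt hup hdm
  have h₁ : (P' : ℝ) < √n := by linarith
  have h₂ : √n - P' < Q := by linarith
  have h₃ : (Q : ℝ) < √n + P' := by nlinarith
  -- `Q Q' = (√n - P') (√n + P')`, so `h₂` gives `Q' < √n + P'` and `h₃` gives `√n - P' < Q'`.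
  exact ⟨hQ'pos, Dvd.intro_left _ hQQ', h₁, by nlinarith, by nlinarith⟩

lemma gaussMap_div (hirr : Irrational √n) (h : IsReduced n (P, Q)) :
    gaussMap (Q / (√n + P)) = (next n (P, Q)).2 / (√n + (next n (P, Q)).1) := by
  have hQQ' := h.mul_next_snd
  have hP'R : ((next n (P, Q)).1 : ℝ) = digit n (P, Q) * Q - P := by simp [next]
  set P' := (next n (P, Q)).1
  set Q' := (next n (P, Q)).2
  have hQ : (0 : ℝ) < Q := by exact_mod_cast h.pos
  have hpos : (0 : ℝ) < √n + P' := by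
    have hQ'Q := (h.next hirr).lt_sqrt_add
    have : (0 : ℝ) < Q' := by exact_mod_cast (h.next hirr).pos
    linarith
  have hQQ'R : (Q : ℝ) * Q' = n - P' ^ 2 := by exact_mod_cast hQQ'
  rw [gaussMap, one_div_div, Int.fract, div_sub' hQ.ne', div_eq_div_iff hQ.ne' hpos.ne']
  change (√n + P - Q * digit n (P, Q)) * (√n + P') = Q' * Q
  rw [hP'R] at hQQ'R ⊢
  linear_combination Real.sq_sqrt n.cast_nonneg - hQQ'R

lemma eq_of_next_eq (hirr : Irrational √n) {s t : ℤ × ℤ} (hs : IsReduced n s)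
    (ht : IsReduced n t) (he : next n s = next n t) : s = t := by
  obtain ⟨P₁, Q₁⟩ := s
  obtain ⟨P₂, Q₂⟩ := t
  have hQ : Q₁ = Q₂ := by
    have h₁ := hs.mul_next_snd
    rw [he, ← ht.mul_next_snd] at h₁
    exact mul_right_cancel₀ (ht.next hirr).pos.ne' h₁
  subst hQ
  have hP := congrArg Prod.fst he
  simp only [next] at hP
  have hdvd : Q₁ ∣ P₁ - P₂ :=
    ⟨digit n (P₁, Q₁) - digit n (P₂, Q₁), by linear_combination -hP⟩
  exact Prod.ext (hs.eq_of_dvd_sub ht hdvd) rfl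

end IsReduced

lemma nat_sqrt_lt_sqrt (hirr : Irrational √n) : (Nat.sqrt n : ℝ) < √n :=
  Real.nat_sqrt_le_real_sqrt.lt_of_ne fun h => hirr ⟨Nat.sqrt n, by exact_mod_cast h⟩

lemma isReduced_init (hirr : Irrational √n) : IsReduced n (init n) := by
  have hlo := nat_sqrt_lt_sqrt hirr
  have hhi := Real.real_sqrt_lt_nat_sqrt_succ (a := n)
  have hs := Real.sq_sqrt n.cast_nonneg
  have hQ : 0 < (n : ℤ) - Nat.sqrt n ^ 2 := by
    have : (0 : ℝ) < n - Nat.sqrt n ^ 2 := by nlinarith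
    exact_mod_cast this
  have hQ₁ : (1 : ℝ) ≤ n - Nat.sqrt n ^ 2 := by exact_mod_cast hQ
  refine ⟨hQ, dvd_rfl, hlo, ?_, ?_⟩ <;> simp only [init] <;> push_cast <;> nlinarith

lemma fract_sqrt_eq_init (hirr : Irrational √n) :
    Int.fract √n = (init n).2 / (√n + (init n).1) := by
  have hpos : (0 : ℝ) < √n + Nat.sqrt n := by
    linarith [nat_sqrt_lt_sqrt hirr, Real.sqrt_nonneg n]
  simp only [init, Int.fract, Real.floor_real_sqrt_eq_nat_sqrt]
  push_cast
  rw [eq_div_iff hpos.ne']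
  linear_combination Real.sq_sqrt n.cast_nonneg

lemma state_succ (i : ℕ) : state n (i + 1) = next n (state n i) :=
  Function.iterate_succ_apply' _ _ _

lemma isReduced_state (hirr : Irrational √n) (i : ℕ) : IsReduced n (state n i) := by
  induction i with
  | zero => exact isReduced_init hirr
  | succ i ih => rw [state_succ]; exact ih.next hirr

lemma gaussMap_iterate_fract_sqrt (hirr : Irrational √n) (i : ℕ) :
    gaussMap^[i] (Int.fract √n) = (state n i).2 / (√n + (state n i).1) := by
  induction i with
  | zero => exact fract_sqrt_eq_init hirr
  | succ i ih =>
    rw [Function.iterate_succ_apply', ih, state_succ]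
    exact (isReduced_state hirr i).gaussMap_div hirr

lemma cfDigit_succ_fract_sqrt (hirr : Irrational √n) (i : ℕ) :
    cfDigit (i + 1) (Int.fract √n) = digit n (state n i) := by
  rw [cfDigit, Nat.add_sub_cancel, gaussMap_iterate_fract_sqrt hirr, one_div_div]
  rfl

lemma init_eq_state_of_state_eq (hirr : Irrational √n) {i d : ℕ}
    (h : state n i = state n (i + d)) : init n = state n d := by
  induction i with
  | zero => simpa [state] using h
  | succ i ih =>
    rw [state_succ, show i + 1 + d = i + d + 1 by omega, state_succ] at h
    exact ih ((isReduced_state hirr i).eq_of_next_eq hirr (isReduced_state hirr _) h)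

lemma isDigitPeriod_of_init_eq (hirr : Irrational √n) {d : ℕ} (h : init n = state n d) :
    IsDigitPeriod (Int.fract √n) d := by
  intro i hi
  obtain ⟨j, rfl⟩ := Nat.exists_eq_add_of_le' hi
  have hper : state n (j + d) = state n j := by
    rw [state, Function.iterate_add_apply]
    exact congrArg _ h.symm
  rw [show j + 1 + d = j + d + 1 by omega, cfDigit_succ_fract_sqrt hirr,
    cfDigit_succ_fract_sqrt hirr, hper]

lemma injOn_state (hirr : Irrational √n) {T : ℕ}
    (hT : ∀ d, 1 ≤ d → IsDigitPeriod (Int.fract √n) d → T ≤ d) :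
    Set.InjOn (state n) (Finset.range T) := by
  intro i hi j hj he
  wlog hij : i ≤ j generalizing i j
  · exact (this hj hi he.symm (le_of_not_ge hij)).symm
  obtain ⟨d, rfl⟩ := Nat.exists_eq_add_of_le hij
  rcases Nat.eq_zero_or_pos d with rfl | hd
  · rfl
  have := hT d hd (isDigitPeriod_of_init_eq hirr (init_eq_state_of_state_eq hirr he))
  simp only [Finset.coe_range, Set.mem_Iio] at hj
  omega

theorem sum_digit_le_sum_card_divisors (hirr : Irrational √n) (S : Finset (ℤ × ℤ))
    (hS : ∀ s ∈ S, IsReduced n s) :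
    ∑ s ∈ S, digit n s ≤ ∑ u ∈ Finset.Icc (-(Nat.sqrt n : ℤ)) (Nat.sqrt n),
      ((((n : ℤ) - u ^ 2).toNat.divisors.card : ℕ) : ℤ) := by
  have hsrc : ∑ s ∈ S, digit n s = (S.sigma fun s => Finset.Icc 1 (digit n s)).card := by
    rw [Finset.card_sigma, Nat.cast_sum]
    refine Finset.sum_congr rfl fun s hs => ?_
    rw [Int.card_Icc, add_sub_cancel_right,
      Int.toNat_of_nonneg (zero_le_one.trans (hS s hs).one_le_digit)]
  rw [hsrc, ← Nat.cast_sum, ← Finset.card_sigma, Nat.cast_le]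
  refine Finset.card_le_card_of_injOn (fun x => ⟨x.2 * x.1.2 - x.1.1, x.1.2.toNat⟩) ?_ ?_
  · rintro ⟨⟨P, Q⟩, k⟩ hx
    simp only [Finset.coe_sigma, Set.mem_sigma_iff, Finset.mem_coe, Finset.mem_Icc] at hx ⊢
    obtain ⟨hPQ, hk₁, hk⟩ := hx
    have h := hS _ hPQ
    have hsq := h.sq_mul_sub_lt hirr hk₁ hk
    refine ⟨abs_le.1 (abs_le_nat_sqrt_of_sq_le hsq.le), Nat.mem_divisors.2 ⟨?_, by omega⟩⟩
    refine Int.natCast_dvd_natCast.1 ?_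
    rw [Int.toNat_of_nonneg h.pos.le, Int.toNat_of_nonneg (by omega)]
    exact dvd_sub_sq_mul_sub h.dvd k
  · rintro ⟨⟨P₁, Q₁⟩, k₁⟩ h₁ ⟨⟨P₂, Q₂⟩, k₂⟩ h₂ he
    simp only [Finset.coe_sigma, Set.mem_sigma_iff, Finset.mem_coe, Finset.mem_Icc] at h₁ h₂
    simp only [Sigma.mk.injEq, heq_eq_eq] at he
    have hr₁ := hS _ h₁.1
    have hr₂ := hS _ h₂.1
    obtain rfl : Q₁ = Q₂ := by have := hr₁.pos; have := hr₂.pos; omega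
    obtain rfl : P₁ = P₂ := hr₁.eq_of_dvd_sub hr₂ ⟨k₁ - k₂, by linear_combination -he.1⟩
    obtain rfl : k₁ = k₂ := mul_right_cancel₀ hr₁.pos.ne' (by linarith [he.1])
    rfl

theorem sum_cfDigit_fract_sqrt_le (hirr : Irrational √n) {T : ℕ}
    (hT : ∀ d, 1 ≤ d → IsDigitPeriod (Int.fract √n) d → T ≤ d) :
    ∑ i ∈ Finset.Icc 1 T, cfDigit i (Int.fract √n) ≤
      ∑ u ∈ Finset.Icc (-(Nat.sqrt n : ℤ)) (Nat.sqrt n),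
        ((((n : ℤ) - u ^ 2).toNat.divisors.card : ℕ) : ℤ) :=
  calc ∑ i ∈ Finset.Icc 1 T, cfDigit i (Int.fract √n)
      = ∑ i ∈ Finset.range T, digit n (state n i) := by
        simp only [← cfDigit_succ_fract_sqrt hirr]
        rw [Finset.range_eq_Ico, Finset.sum_Ico_add' (fun i => cfDigit i (Int.fract √n)),
          zero_add, Finset.Ico_add_one_right_eq_Icc]
    _ = ∑ s ∈ (Finset.range T).image (state n), digit n s :=
        (Finset.sum_image (injOn_state hirr hT)).symm
    _ ≤ _ := sum_digit_le_sum_card_divisors hirr _ (by simp [isReduced_state hirr])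

end

end SqrtContFrac

lemma xPlus_two_mul {m q : ℤ} {n : ℕ} (hn : (n : ℤ) = m ^ 2 + q) :
    xPlus (2 * m) q = √n - m := by
  have hdisc : ((2 * m : ℤ) : ℝ) ^ 2 + 4 * q = 2 ^ 2 * n := by
    rw [show (n : ℝ) = ((n : ℤ) : ℝ) from rfl, hn]; push_cast; ring
  rw [xPlus, hdisc, Real.sqrt_mul (by norm_num), Real.sqrt_sq (by norm_num)]
  push_cast
  ring

/-- Lemma 3, case of even `p`: with `Δ = p² + 4q` positive and not a perfect square,
and `n = Δ/4 ∈ ℤ`, the sum of the partial quotients over one least period of the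
continued fraction of `frac (x₊(p,q))` is at most
`2 Σ_{u=1}^{⌊√n⌋} τ(n − u²) + τ(n)`. -/
theorem arnold_lemma3_even (p q : ℤ) (hp : Even p)
    (hΔ : 0 < p ^ 2 + 4 * q) (hns : ¬ IsSquare (p ^ 2 + 4 * q)) :
    periodSum p q ≤
      2 * (∑ u ∈ Finset.Icc 1 (Nat.sqrt ((p ^ 2 + 4 * q) / 4).toNat),
            (((((p ^ 2 + 4 * q) / 4).toNat - u ^ 2).divisors.card : ℤ)))
        + ((((p ^ 2 + 4 * q) / 4).toNat.divisors.card : ℤ)) := by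
  obtain ⟨m, rfl⟩ := even_iff_two_dvd.1 hp
  have hdisc : (2 * m) ^ 2 + 4 * q = 4 * (m ^ 2 + q) := by ring
  set n := (((2 * m) ^ 2 + 4 * q) / 4).toNat
  have hn : (n : ℤ) = m ^ 2 + q := by
    simp only [n]
    rw [hdisc, Int.mul_ediv_cancel_left _ four_ne_zero, Int.toNat_of_nonneg (by omega)]
  have hirr : Irrational √n := irrational_sqrt_natCast_iff.2 fun ⟨t, ht⟩ =>
    hns ⟨2 * t, by rw [hdisc, ← hn, ht]; push_cast; ring⟩
  have hfract : Int.fract (xPlus (2 * m) q) = Int.fract √n := by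
    rw [xPlus_two_mul hn, Int.fract_sub_intCast]
  calc periodSum (2 * m) q
      = ∑ i ∈ Finset.Icc 1 (period (2 * m) q), cfDigit i (Int.fract √n) := by
        rw [periodSum, hfract]
    _ ≤ ∑ u ∈ Finset.Icc (-(Nat.sqrt n : ℤ)) (Nat.sqrt n),
          ((((n : ℤ) - u ^ 2).toNat.divisors.card : ℕ) : ℤ) :=
        SqrtContFrac.sum_cfDigit_fract_sqrt_le hirr fun d hd hper =>
          Nat.sInf_le ⟨hd, by rwa [hfract]⟩
    _ = _ := by
        rw [Function.Even.sum_Icc_neg (fun u => by simp) (Nat.sqrt n), nsmul_eq_mul]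
        simp only [← Nat.cast_pow, Int.toNat_sub]
        simp
end

section
/- Let p, q be integers with p odd and Δ = p² + 4q positive and not a perfect square. Then the sum of the partial quotients over one least period of the continued fraction of frac(x₊(p,q)) satisfies Σ_{i=1}^{T(p,q)} a_i(frac(x₊(p,q))) ≤ 2·Σ_{j odd, j ≥ 1, j² < Δ} τ((Δ − j²)/4), where each (Δ − j²)/4 is a positive integer. (Lemma 3, case of odd p.) -/
/-!
Write `D = p² + 4q` and `ξ = frac (x₊(p,q))`. Every Gauss iterate of `ξ` has the form
`Q / (√D + P)` for a reduced pair `(P, Q)`: `P` odd, `Q` even, `P² < D`,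
`√D - P < Q < √D + P`, `2Q ∣ D - P²`; its next partial quotient is `a = ⌊(√D + P) / Q⌋`.
Each of the `a` numbers `j = m Q - P` (`1 ≤ m ≤ a`) is odd with `j² < D`, and `Q / 2` divides
`(D - j²) / 4`. Conversely `j` and `Q` recover `P` (it is pinned to an interval of length `Q`),
hence `m` and the iterate, and iterates inside one least period are distinct. So the digits of
one period inject into the triples `(|j|, sign j, d)` with `d ∣ (D - j²) / 4`, of which there are
`2 Σ τ((D - j²) / 4)`.
-/

open MeasureTheory Filter Set

theorem cfDigit_succ (k : ℕ) (x : ℝ) : cfDigit (k + 1) x = ⌊1 / gaussMap^[k] x⌋ := rfl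

theorem cfDigit_add_of_iterate_add_eq {ξ : ℝ} {a t : ℕ}
    (h : gaussMap^[a + t] ξ = gaussMap^[a] ξ) {i : ℕ} (hi : a < i) :
    cfDigit (i + t) ξ = cfDigit i ξ := by
  obtain ⟨k, rfl⟩ := Nat.exists_eq_add_of_lt hi
  rw [show a + k + 1 + t = (k + (a + t)) + 1 by omega, show a + k + 1 = (k + a) + 1 by omega,
    cfDigit_succ, cfDigit_succ, Function.iterate_add_apply gaussMap k (a + t), h,
    Function.iterate_add_apply]

def digitPeriods (ξ : ℝ) : Set ℕ :=
  {T : ℕ | 1 ≤ T ∧ ∀ i : ℕ, 1 ≤ i → cfDigit (i + T) ξ = cfDigit i ξ}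

theorem cfDigit_add_mul_of_mem_digitPeriods {ξ : ℝ} {T : ℕ} (hT : T ∈ digitPeriods ξ)
    {i : ℕ} (hi : 1 ≤ i) (N : ℕ) : cfDigit (i + N * T) ξ = cfDigit i ξ := by
  induction N with
  | zero => simp
  | succ N ih => rw [Nat.succ_mul, ← add_assoc, hT.2 _ (by omega), ih]

theorem sub_mem_digitPeriods_of_iterate_eq {ξ : ℝ} {T a b : ℕ} (hT : T ∈ digitPeriods ξ)
    (hab : a < b) (h : gaussMap^[b] ξ = gaussMap^[a] ξ) : b - a ∈ digitPeriods ξ := by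
  refine ⟨by omega, fun i hi => ?_⟩
  have hcycle : gaussMap^[a + (b - a)] ξ = gaussMap^[a] ξ := by
    rwa [Nat.add_sub_cancel' hab.le]
  have hlarge : a < i + (a + 1) * T := by nlinarith [hT.1]
  rw [← cfDigit_add_mul_of_mem_digitPeriods hT (by omega) (a + 1), add_right_comm,
    cfDigit_add_of_iterate_add_eq hcycle hlarge, cfDigit_add_mul_of_mem_digitPeriods hT hi]

theorem injOn_iterate_gaussMap (ξ : ℝ) :
    InjOn (fun k => gaussMap^[k] ξ) (Iio (sInf (digitPeriods ξ))) := by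
  have key : ∀ a b, a < b → b < sInf (digitPeriods ξ) → gaussMap^[b] ξ ≠ gaussMap^[a] ξ := by
    intro a b hab hb h
    have hmem : sInf (digitPeriods ξ) ∈ digitPeriods ξ :=
      Nat.sInf_mem (nonempty_iff_ne_empty.mpr fun he => by simp [he] at hb)
    have := Nat.sInf_le (sub_mem_digitPeriods_of_iterate_eq hmem hab h)
    omega
  intro a ha b hb h
  rcases lt_trichotomy a b with hab | rfl | hab
  · exact absurd h.symm (key a b hab hb)
  · rfl
  · exact absurd h (key b a hab ha)

theorem abs_lt_sqrt_of_sq_lt {x D : ℤ} (hx : x ^ 2 < D) : |(x : ℝ)| < √(D : ℝ) := by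
  rw [Real.lt_sqrt (abs_nonneg _), sq_abs]
  exact_mod_cast hx

/-- `(P, Q)` describes the reduced quadratic irrational `(√D + P) / Q`: it exceeds `1` and its
conjugate `(P - √D) / Q` lies in `(-1, 0)`. Parity and `2Q ∣ D - P²` are the invariants coming
from `D ≡ 1 [ZMOD 4]`. -/
structure IsReducedPair (D P Q : ℤ) : Prop where
  odd : Odd P
  even : Even Q
  sq_lt : P ^ 2 < D
  sqrt_sub_lt : √(D : ℝ) - P < Q
  lt_sqrt_add : (Q : ℝ) < √(D : ℝ) + P
  two_mul_dvd : 2 * Q ∣ D - P ^ 2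

namespace IsReducedPair

variable {D P Q : ℤ}

theorem sq_sqrt (h : IsReducedPair D P Q) : √(D : ℝ) ^ 2 = D :=
  Real.sq_sqrt (by exact_mod_cast (sq_nonneg P).trans h.sq_lt.le)

theorem lt_sqrt (h : IsReducedPair D P Q) : (P : ℝ) < √(D : ℝ) :=
  (le_abs_self _).trans_lt (abs_lt_sqrt_of_sq_lt h.sq_lt)

theorem right_pos (h : IsReducedPair D P Q) : 0 < Q := by
  have := h.sqrt_sub_lt
  have := h.lt_sqrt
  exact_mod_cast (show (0 : ℝ) < Q by linarith)

theorem one_le_floor (h : IsReducedPair D P Q) : 1 ≤ ⌊(√(D : ℝ) + P) / Q⌋ := by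
  refine Int.le_floor.mpr ?_
  rw [Int.cast_one, one_le_div (by exact_mod_cast h.right_pos)]
  exact h.lt_sqrt_add.le

theorem mul_sub_odd_sq_lt_dvd (hD : Irrational √(D : ℝ)) (h : IsReducedPair D P Q) {m : ℤ}
    (hm₁ : 1 ≤ m) (hm₂ : m ≤ ⌊(√(D : ℝ) + P) / Q⌋) :
    Odd (m * Q - P) ∧ (m * Q - P) ^ 2 < D ∧ 2 * Q ∣ D - (m * Q - P) ^ 2 := by
  set s := √(D : ℝ)
  have hQ : (0 : ℝ) < Q := by exact_mod_cast h.right_pos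
  have hle : (m : ℝ) * Q - P ≤ s := by
    have := (Int.le_floor.mp hm₂)
    rw [le_div_iff₀ hQ] at this
    linarith
  have hlt : ((m * Q - P : ℤ) : ℝ) < s :=
    lt_of_le_of_ne (by push_cast; exact hle) (hD.ne_int _).symm
  have hgt : -s < ((m * Q - P : ℤ) : ℝ) := by
    have : (1 : ℝ) ≤ m := by exact_mod_cast hm₁
    have := h.lt_sqrt
    push_cast
    nlinarith
  refine ⟨(h.even.mul_left m).sub_odd h.odd, ?_, ?_⟩
  · have := sq_lt_sq' hgt hlt
    rw [h.sq_sqrt] at this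
    exact_mod_cast this
  · obtain ⟨c, hc⟩ := h.even
    have hid : D - (m * Q - P) ^ 2 = (D - P ^ 2) + 2 * Q * (m * P - m ^ 2 * c) := by
      rw [hc]; ring
    rw [hid]
    exact dvd_add h.two_mul_dvd (dvd_mul_right _ _)

/-- One step of the Gauss map: `P' = a Q - P` and `Q' = (D - P'²) / Q`,
where `a = ⌊(√D + P) / Q⌋`. -/
theorem gaussMap_eq (hD : Irrational √(D : ℝ)) (h : IsReducedPair D P Q) :
    ∃ P' Q', IsReducedPair D P' Q' ∧
      gaussMap (Q / (√(D : ℝ) + P)) = Q' / (√(D : ℝ) + P') := by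
  set s := √(D : ℝ)
  set a := ⌊(s + P) / Q⌋
  set P' := a * Q - P
  have hQ : (0 : ℝ) < Q := by exact_mod_cast h.right_pos
  obtain ⟨hodd, hsq, hdvd⟩ := h.mul_sub_odd_sq_lt_dvd hD h.one_le_floor le_rfl
  obtain ⟨Q', hQ'⟩ := dvd_trans (dvd_mul_left Q 2) hdvd
  have hQQ' : (Q : ℝ) * Q' = (s - P') * (s + P') := by
    rw [mul_comm (s - _), ← sq_sub_sq, h.sq_sqrt]; exact_mod_cast hQ'.symm
  have hsP' := abs_lt_sqrt_of_sq_lt hsq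
  rw [abs_lt] at hsP'
  have hQ'pos : (0 : ℝ) < Q' := by
    refine pos_of_mul_pos_right (hQQ' ▸ mul_pos ?_ ?_) hQ.le <;> linarith
  have hfract : gaussMap (Q / (s + P)) = (s - P') / Q := by
    rw [gaussMap, one_div_div, Int.fract]
    push_cast [P']
    field_simp
    ring
  have hQ'eq : (Q' : ℝ) / (s + P') = (s - P') / Q := by
    rw [div_eq_div_iff (by linarith) hQ.ne']
    linarith
  have hlt : s - P' < Q := by
    have := Int.lt_floor_add_one ((s + P) / Q)
    rw [div_lt_iff₀ hQ] at this
    push_cast [P']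
    linarith
  have hgt : Q < s + P' := by
    have ha : (1 : ℝ) ≤ a := by exact_mod_cast h.one_le_floor
    have := h.lt_sqrt
    push_cast [P']
    nlinarith
  refine ⟨P', Q', ⟨hodd, ?_, hsq, ?_, ?_, ?_⟩, hfract.trans hQ'eq.symm⟩
  · rw [hQ', mul_comm 2 Q, mul_dvd_mul_iff_left h.right_pos.ne'] at hdvd
    exact even_iff_two_dvd.mpr hdvd
  · refine lt_of_mul_lt_mul_right ?_ (by linarith : 0 ≤ s + P')
    rw [← hQQ', mul_comm]
    exact mul_lt_mul_of_pos_left hgt hQ'pos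
  · refine lt_of_mul_lt_mul_left ?_ hQ.le
    rw [hQQ']
    exact mul_lt_mul_of_pos_right hlt (by linarith)
  · obtain ⟨c, hc⟩ := h.even
    exact ⟨c, by rw [hQ', hc]; ring⟩

/-- `m Q - P` determines `P` (and then `m`), since `P` is pinned to the interval `(√D - Q, √D)`
of length `Q`. -/
theorem eq_of_mul_sub_eq {P₁ P₂ m₁ m₂ : ℤ} (h₁ : IsReducedPair D P₁ Q)
    (h₂ : IsReducedPair D P₂ Q) (he : m₁ * Q - P₁ = m₂ * Q - P₂) : P₁ = P₂ ∧ m₁ = m₂ := by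
  have hdvd : Q ∣ P₁ - P₂ := ⟨m₁ - m₂, by linarith⟩
  have habs : |P₁ - P₂| < Q := by
    have := h₁.lt_sqrt; have := h₂.lt_sqrt
    have := h₁.sqrt_sub_lt; have := h₂.sqrt_sub_lt
    have : |(P₁ : ℝ) - P₂| < Q := abs_sub_lt_iff.mpr ⟨by linarith, by linarith⟩
    exact_mod_cast this
  have hP : P₁ = P₂ := sub_eq_zero.mp (Int.eq_zero_of_abs_lt_dvd hdvd habs)
  subst hP
  exact ⟨rfl, mul_right_cancel₀ h₁.right_pos.ne' (by linarith)⟩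

end IsReducedPair

def oddBelowSqrt (D : ℤ) : Finset ℕ :=
  (Finset.range D.toNat).filter (fun j : ℕ => Odd j ∧ (j : ℤ) ^ 2 < D)

theorem mem_oddBelowSqrt {D x : ℤ} (hx : Odd x) (hsq : x ^ 2 < D) :
    x.natAbs ∈ oddBelowSqrt D := by
  have hsq' : ((x.natAbs : ℤ)) ^ 2 < D := by rwa [Int.natAbs_sq]
  have hpos : 0 < x.natAbs := Int.natAbs_pos.mpr (by rintro rfl; simp at hx)
  have hlt : (x.natAbs : ℤ) < D := by nlinarith
  exact Finset.mem_filter.mpr ⟨Finset.mem_range.mpr (by omega), Int.natAbs_odd.mpr hx, hsq'⟩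

theorem toNat_mem_divisors_toNat_div_four {c N : ℤ} (hc : 0 < c) (hN : 0 < N) (h : 4 * c ∣ N) :
    c.toNat ∈ (N / 4).toNat.divisors := by
  obtain ⟨k, rfl⟩ := h
  have hck : 0 < c * k := by linarith
  rw [mul_assoc, Int.mul_ediv_cancel_left _ (by norm_num)]
  refine Nat.mem_divisors.mpr ⟨Int.natCast_dvd_natCast.mp ?_, by omega⟩
  rw [Int.toNat_of_nonneg hc.le, Int.toNat_of_nonneg hck.le]
  exact dvd_mul_right c k

theorem sum_floor_le_two_mul_sum_card_divisors {D : ℤ} (hD : Irrational √(D : ℝ))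
    (S : Finset (ℤ × ℤ)) (hS : ∀ x ∈ S, IsReducedPair D x.1 x.2) :
    ∑ x ∈ S, ⌊(√(D : ℝ) + x.1) / x.2⌋ ≤
      2 * ∑ j ∈ oddBelowSqrt D, ((((D - (j : ℤ) ^ 2) / 4).toNat.divisors.card : ℤ)) := by
  set a : ℤ × ℤ → ℤ := fun x => ⌊(√(D : ℝ) + x.1) / x.2⌋
  let src := S.sigma fun x => Finset.Icc 1 (a x)
  let tgt := (oddBelowSqrt D ×ˢ (Finset.univ : Finset Bool)).sigma
    fun jb => ((D - (jb.1 : ℤ) ^ 2) / 4).toNat.divisors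
  -- `(x, m) ↦ (|m Q - P|, sign of m Q - P, Q / 2)`
  let ψ : (Σ _ : ℤ × ℤ, ℤ) → Σ _ : ℕ × Bool, ℕ := fun y =>
    ⟨((y.2 * y.1.2 - y.1.1).natAbs, decide (0 < y.2 * y.1.2 - y.1.1)), (y.1.2 / 2).toNat⟩
  have hsrc : ∑ x ∈ S, a x = src.card := by
    rw [Finset.card_sigma, Nat.cast_sum]
    refine Finset.sum_congr rfl fun x hx => ?_
    rw [Int.card_Icc, add_sub_cancel_right, Int.toNat_of_nonneg (by
      linarith [(hS x hx).one_le_floor])]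
  have htgt : (tgt.card : ℤ) =
      2 * ∑ j ∈ oddBelowSqrt D, ((((D - (j : ℤ) ^ 2) / 4).toNat.divisors.card : ℤ)) := by
    rw [Finset.card_sigma, Finset.sum_product, Nat.cast_sum, Finset.mul_sum]
    simp
  have hmaps : MapsTo ψ src tgt := by
    rintro ⟨x, m⟩ hxm
    obtain ⟨hx, hm₁, hm₂⟩ : x ∈ S ∧ 1 ≤ m ∧ m ≤ a x := by simpa [src] using hxm
    obtain ⟨hodd, hsq, hdvd⟩ := (hS x hx).mul_sub_odd_sq_lt_dvd hD hm₁ hm₂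
    obtain ⟨c, hc⟩ := (hS x hx).even
    have hc0 : 0 < c := by linarith [(hS x hx).right_pos]
    have hhalf : x.2 / 2 = c := by omega
    refine Finset.mem_sigma.mpr ⟨Finset.mem_product.mpr
      ⟨mem_oddBelowSqrt hodd hsq, Finset.mem_univ _⟩, ?_⟩
    simp only [ψ, Int.natAbs_sq, hhalf]
    exact toNat_mem_divisors_toNat_div_four hc0 (sub_pos.mpr hsq)
      (by rwa [show 4 * c = 2 * x.2 by omega])
  have hinj : InjOn ψ src := by
    rintro ⟨⟨P₁, Q₁⟩, m₁⟩ h₁ ⟨⟨P₂, Q₂⟩, m₂⟩ h₂ he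
    obtain ⟨hx₁, hm₁, hm₁'⟩ : (P₁, Q₁) ∈ S ∧ 1 ≤ m₁ ∧ m₁ ≤ a (P₁, Q₁) := by
      simpa [src] using h₁
    obtain ⟨hx₂, -, -⟩ : (P₂, Q₂) ∈ S ∧ 1 ≤ m₂ ∧ m₂ ≤ a (P₂, Q₂) := by simpa [src] using h₂
    have hred₁ := hS _ hx₁
    have hred₂ := hS _ hx₂
    simp only [ψ, Sigma.mk.inj_iff, Prod.mk.injEq, heq_eq_eq, decide_eq_decide] at he
    obtain ⟨⟨habs, hsign⟩, hhalf⟩ := he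
    have hQ : Q₁ = Q₂ := by
      obtain ⟨c₁, hc₁⟩ := hred₁.even
      obtain ⟨c₂, hc₂⟩ := hred₂.even
      have := hred₁.right_pos
      have := hred₂.right_pos
      omega
    subst hQ
    have hP' : m₁ * Q₁ - P₁ = m₂ * Q₁ - P₂ := by
      obtain ⟨k₁, hk₁⟩ := (hred₁.mul_sub_odd_sq_lt_dvd hD hm₁ hm₁').1
      omega
    obtain ⟨rfl, rfl⟩ := hred₁.eq_of_mul_sub_eq hred₂ hP'
    rfl
  rw [hsrc, ← htgt]
  exact_mod_cast Finset.card_le_card_of_injOn ψ hmaps hinj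

theorem four_dvd_sub_sq_and_div_four_pos {p q j : ℤ} (hp : Odd p) (hj : Odd j)
    (hlt : j ^ 2 < p ^ 2 + 4 * q) :
    4 ∣ p ^ 2 + 4 * q - j ^ 2 ∧ 0 < (p ^ 2 + 4 * q - j ^ 2) / 4 := by
  have hdvd : 4 ∣ p ^ 2 + 4 * q - j ^ 2 := by
    have := Int.sq_mod_four_eq_one_of_odd hp
    have := Int.sq_mod_four_eq_one_of_odd hj
    omega
  exact ⟨hdvd, Int.ediv_pos_of_pos_of_dvd (by linarith) (by norm_num) hdvd⟩

/-- `frac (x₊(p,q)) = (√D - P) / 2 = Q / (√D + P)` with `P = p + 2 ⌊x₊⌋` and `2Q = D - P²`. -/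
theorem exists_isReducedPair_fract_xPlus {p q : ℤ} (hp : Odd p)
    (hD : Irrational √((p ^ 2 + 4 * q : ℤ) : ℝ)) :
    ∃ P Q, IsReducedPair (p ^ 2 + 4 * q) P Q ∧
      Int.fract (xPlus p q) = Q / (√((p ^ 2 + 4 * q : ℤ) : ℝ) + P) := by
  set D := p ^ 2 + 4 * q
  set s := √(D : ℝ)
  have hs0 : 0 < s := (Real.sqrt_nonneg _).lt_of_ne (by simpa using (hD.ne_int 0).symm)
  have hs2 : s ^ 2 = D := Real.sq_sqrt (Real.sqrt_pos.mp hs0).le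
  have hs1 : 1 < s := by
    have hD0 : 0 < D := by exact_mod_cast Real.sqrt_pos.mp hs0
    have : 1 ≤ s := Real.one_le_sqrt.mpr (by exact_mod_cast hD0)
    exact this.lt_of_ne (by simpa using (hD.ne_int 1).symm)
  set n := ⌊xPlus p q⌋
  set P := p + 2 * n
  set Q := 2 * (q - p * n - n ^ 2)
  have hξ : Int.fract (xPlus p q) = (s - P) / 2 := by
    have hx : xPlus p q = (s - p) / 2 := by rw [xPlus]; push_cast [s, D]; rfl
    show xPlus p q - n = _
    rw [hx]
    push_cast [P]
    ring
  have hfract_pos : 0 < s - P := by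
    have := Int.fract_nonneg (xPlus p q)
    rw [hξ] at this
    exact (by linarith : 0 ≤ s - P).lt_of_ne (sub_ne_zero.mpr (hD.ne_int P)).symm
  have hfract_lt : s - P < 2 := by
    have := Int.fract_lt_one (xPlus p q)
    rw [hξ] at this
    linarith
  have hP : 1 ≤ P := by
    have : (-1 : ℝ) < P := by linarith
    have : -1 < P := by exact_mod_cast this
    obtain ⟨k, hk⟩ := hp.add_even (even_two_mul n)
    omega
  have hPR : (1 : ℝ) ≤ P := by exact_mod_cast hP
  have hQR : 2 * (Q : ℝ) = (s - P) * (s + P) := by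
    rw [mul_comm (s - _), ← sq_sub_sq, hs2]
    push_cast [D, Q, P]
    ring
  refine ⟨P, Q, ⟨hp.add_even (even_two_mul n), even_two_mul _, ?_, ?_, ?_, ⟨1, by ring⟩⟩, ?_⟩
  · have : (P : ℝ) ^ 2 < s ^ 2 := by nlinarith
    rw [hs2] at this
    exact_mod_cast this
  · nlinarith
  · nlinarith
  · rw [hξ, div_eq_div_iff (by norm_num) (by linarith)]
    linarith

theorem IsReducedPair.exists_iterate_gaussMap {D P Q : ℤ} (hD : Irrational √(D : ℝ))
    (h : IsReducedPair D P Q) (k : ℕ) :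
    ∃ P' Q', IsReducedPair D P' Q' ∧
      gaussMap^[k] (Q / (√(D : ℝ) + P)) = Q' / (√(D : ℝ) + P') := by
  induction k with
  | zero => exact ⟨P, Q, h, rfl⟩
  | succ k ih =>
    obtain ⟨P', Q', h', hk⟩ := ih
    rw [Function.iterate_succ_apply', hk]
    exact h'.gaussMap_eq hD

/-- Lemma 3, case of odd `p`: with `Δ = p² + 4q` positive and not a perfect square,
each `(Δ − j²)/4` (for odd `j ≥ 1` with `j² < Δ`) is a positive integer, and the sum
of the partial quotients over one least period of the continued fraction of
`frac (x₊(p,q))` is at most `2 Σ_{j odd, j ≥ 1, j² < Δ} τ((Δ − j²)/4)`. -/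
theorem arnold_lemma3_odd (p q : ℤ) (hp : Odd p)
    (hΔ : 0 < p ^ 2 + 4 * q) (hns : ¬ IsSquare (p ^ 2 + 4 * q)) :
    (∀ j : ℕ, Odd j → (j : ℤ) ^ 2 < p ^ 2 + 4 * q →
      (4 : ℤ) ∣ (p ^ 2 + 4 * q - (j : ℤ) ^ 2) ∧ 0 < (p ^ 2 + 4 * q - (j : ℤ) ^ 2) / 4) ∧
    periodSum p q ≤
      2 * ∑ j ∈ (Finset.range (p ^ 2 + 4 * q).toNat).filter
            (fun j : ℕ => Odd j ∧ (j : ℤ) ^ 2 < p ^ 2 + 4 * q),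
          ((((p ^ 2 + 4 * q - (j : ℤ) ^ 2) / 4).toNat.divisors.card : ℤ)) := by
  refine ⟨fun j hj hlt => four_dvd_sub_sq_and_div_four_pos hp hj.natCast hlt, ?_⟩
  have hD : Irrational √((p ^ 2 + 4 * q : ℤ) : ℝ) := irrational_sqrt_intCast_iff.mpr ⟨hns, hΔ.le⟩
  obtain ⟨P₀, Q₀, h₀, hξ⟩ := exists_isReducedPair_fract_xPlus hp hD
  choose P Q hred horbit using h₀.exists_iterate_gaussMap hD
  set D := p ^ 2 + 4 * q
  set ξ := Int.fract (xPlus p q)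
  have hinj : InjOn (fun k => (P k, Q k)) (Finset.range (period p q)) := by
    intro k hk k' hk' he
    rw [Finset.coe_range] at hk hk'
    -- `period p q` unfolds to `sInf (digitPeriods ξ)`
    refine injOn_iterate_gaussMap ξ hk hk' ?_
    obtain ⟨hP, hQ⟩ := Prod.mk.inj he
    simp only [hξ, horbit, hP, hQ]
  calc periodSum p q = ∑ k ∈ Finset.range (period p q), cfDigit (k + 1) ξ := by
        rw [periodSum, ← Finset.Ico_add_one_right_eq_Icc, Finset.sum_Ico_eq_sum_range,
          add_tsub_cancel_right]
        exact Finset.sum_congr rfl fun k _ => by rw [add_comm]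
    _ = ∑ x ∈ (Finset.range (period p q)).image (fun k => (P k, Q k)),
          ⌊(√(D : ℝ) + x.1) / x.2⌋ := by
        rw [Finset.sum_image hinj]
        exact Finset.sum_congr rfl fun k _ => by rw [cfDigit_succ, hξ, horbit, one_div_div]
    _ ≤ _ := sum_floor_le_two_mul_sum_card_divisors hD _ (by simpa using fun k _ => hred k)
end

section
/- Let p, q be integers with Δ = p² + 4q positive and not a perfect square, and suppose the least period T(p,q) is odd. Then 2 · Σ_{i=1}^{T(p,q)} a_i(frac(x₊(p,q))) ≤ f(Δ/4), i.e. the bound of Lemma 3 can be halved: Σ_{i=1}^{T(p,q)} a_i(frac(x₊(p,q))) ≤ f(Δ/4)/2. (Improvement of Lemma 3 for odd period.) -/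
open MeasureTheory Filter Set

/-- The bound `f(Δ/4)` of Lemma 3: for `Δ ≡ 0 (mod 4)`,
`f(Δ/4) = 2 Σ_{u=1}^{⌊√(Δ/4)⌋} τ(Δ/4 − u²) + τ(Δ/4)`; otherwise (`Δ ≡ 1 (mod 4)`),
`f(Δ/4) = 2 Σ_{j odd, j ≥ 1, j² < Δ} τ((Δ − j²)/4)`. -/
def fBound (Δ : ℤ) : ℤ :=
  if Δ % 4 = 0 then
    2 * (∑ u ∈ Finset.Icc 1 (Nat.sqrt (Δ / 4).toNat),
          ((((Δ / 4).toNat - u ^ 2).divisors.card : ℤ)))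
      + (((Δ / 4).toNat.divisors.card : ℤ))
  else
    2 * ∑ j ∈ (Finset.range Δ.toNat).filter (fun j : ℕ => Odd j ∧ (j : ℤ) ^ 2 < Δ),
        ((((Δ - (j : ℤ) ^ 2) / 4).toNat.divisors.card : ℤ))

/-!
Put `Δ = p² + 4q`. The complete quotients of `frac x₊(p,q)` are numbers `ξ = (u + √Δ)/(2b)` with
`4b ∣ Δ - u²`; they are reduced (`ξ > 1`, `-1 < ξ̄ < 0`), and the Gauss map acts on them by
`ξ ↦ 1/(ξ - ⌊ξ⌋)`, that is, by an explicit map `(u, b) ↦ (u', b')`. A repetition among the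
first `T(p,q)` of them would make the digit sequence periodic with a smaller period, so they are
pairwise distinct.

For such a `ξ` with partial quotient `a` and each `0 ≤ k < a`, writing `ξ - k = (w + √Δ)/(2b)`
gives a solution `(w, c, b)` of `w² + 4cb = Δ` with `b, c ≥ 1` and `2b < w + √Δ`. Reducedness
makes these solutions pairwise distinct, and `(w, c, b) ↦ (-w, b, c)` maps them to solutions
violating that inequality. So twice the sum of the partial quotients over a period is at most the
number of solutions `(u, a, b)` of `u² + 4ab = Δ` with `a, b ≥ 1`. For fixed `u` these solutions
correspond to divisors `a` of `(Δ - u²)/4`, which bounds their number by `f(Δ/4)`.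
-/

open Finset Function

theorem Function.Periodic.of_eventually {β : Type*} {f : ℕ → β} {T e N : ℕ}
    (hf : Periodic f T) (hT : 0 < T) (h : ∀ n, N ≤ n → f (n + e) = f n) : Periodic f e := by
  have hNT : Periodic f (N * T) := by simpa using hf.nat_mul N
  intro n
  calc f (n + e) = f (n + N * T + e) := by rw [add_right_comm, hNT]
    _ = f (n + N * T) := h _ (le_add_left (Nat.le_mul_of_pos_right N hT))
    _ = f n := hNT n

theorem Function.injOn_iterate_of_minimal_period {α β : Type*} {F : α → α} {x : α} {g : α → β}
    {T : ℕ} (hT : Periodic (fun n => g (F^[n] x)) T)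
    (hmin : ∀ e, 0 < e → Periodic (fun n => g (F^[n] x)) e → T ≤ e) :
    Set.InjOn (fun n => F^[n] x) (Set.Iio T) := by
  suffices ∀ m n, m < n → n < T → F^[m] x ≠ F^[n] x by
    intro m hm n hn hmn
    by_contra hne
    rcases Nat.lt_or_gt_of_ne hne with h | h
    · exact this m n h hn hmn
    · exact this n m h hm hmn.symm
  intro m n hmn hnT heq
  have hper : IsPeriodicPt F (n - m) (F^[m] x) := by
    rw [IsPeriodicPt, IsFixedPt, ← iterate_add_apply, Nat.sub_add_cancel hmn.le, heq]
  have hev : ∀ k, m ≤ k → g (F^[k + (n - m)] x) = g (F^[k] x) := by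
    intro k hk
    have := (hper.apply_iterate (k - m)).eq
    simp only [← iterate_add_apply] at this
    rw [show n - m + (k - m + m) = k + (n - m) by omega, Nat.sub_add_cancel hk] at this
    exact congrArg g this
  have := hmin (n - m) (by omega) (hT.of_eventually (by omega) hev)
  omega

lemma periodic_cfDigit_period (p q : ℤ) :
    Periodic (fun n => cfDigit (n + 1) (Int.fract (xPlus p q))) (period p q) := by
  intro n
  rcases Nat.eq_zero_or_pos (period p q) with h | h
  · simp [h]
  · have hmem := (Nat.sInf_mem (Nat.nonempty_of_pos_sInf h)).2 (n + 1) le_add_self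
    rwa [add_right_comm] at hmem

lemma period_le {p q : ℤ} {e : ℕ} (he : 0 < e)
    (h : Periodic (fun n => cfDigit (n + 1) (Int.fract (xPlus p q))) e) : period p q ≤ e := by
  refine Nat.sInf_le ⟨he, fun i hi => ?_⟩
  obtain ⟨n, rfl⟩ := Nat.exists_eq_add_of_le' hi
  simpa [add_right_comm] using h n

namespace QuadIrr

noncomputable def value (Δ : ℤ) (t : ℤ × ℤ) : ℝ := (t.1 + √(Δ : ℝ)) / (2 * t.2)

noncomputable def digit (Δ : ℤ) (t : ℤ × ℤ) : ℤ := ⌊value Δ t⌋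

def shift (t : ℤ × ℤ) (k : ℤ) : ℤ × ℤ := (t.1 - 2 * k * t.2, t.2)

def inv (Δ : ℤ) (t : ℤ × ℤ) : ℤ × ℤ := (-t.1, (Δ - t.1 ^ 2) / (4 * t.2))

noncomputable def step (Δ : ℤ) (t : ℤ × ℤ) : ℤ × ℤ := inv Δ (shift t (digit Δ t))

/-- `value Δ t > 1` and its conjugate `(t.1 - √Δ) / (2 * t.2)` lies in `(-1, 0)`. -/
structure IsReduced (Δ : ℤ) (t : ℤ × ℤ) : Prop where
  snd_pos : 0 < t.2
  dvd : 4 * t.2 ∣ Δ - t.1 ^ 2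
  fst_lt : (t.1 : ℝ) < √(Δ : ℝ)
  sqrt_sub_fst_lt : √(Δ : ℝ) - t.1 < 2 * t.2
  two_mul_snd_lt : 2 * t.2 < t.1 + √(Δ : ℝ)

variable {Δ : ℤ} {t : ℤ × ℤ}

lemma sqrt_sq_of_irrational (hΔ : Irrational √(Δ : ℝ)) : √(Δ : ℝ) ^ 2 = Δ :=
  Real.sq_sqrt (Int.cast_nonneg (irrational_sqrt_intCast_iff.1 hΔ).2)

lemma sub_sq_ne_zero (hΔ : Irrational √(Δ : ℝ)) (n : ℤ) : (Δ : ℝ) - n ^ 2 ≠ 0 := by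
  intro h
  apply hΔ.ne_int |n|
  rw [sub_eq_zero.1 h, Real.sqrt_sq_eq_abs, Int.cast_abs]

lemma irrational_value (hΔ : Irrational √(Δ : ℝ)) (hb : t.2 ≠ 0) : Irrational (value Δ t) := by
  have h := (hΔ.intCast_add t.1).div_intCast (m := 2 * t.2) (by positivity)
  simpa [value] using h

lemma value_shift (hb : t.2 ≠ 0) (k : ℤ) : value Δ (shift t k) = value Δ t - k := by
  have : (t.2 : ℝ) ≠ 0 := by exact_mod_cast hb
  simp only [value, shift]
  push_cast
  field_simp
  ring

lemma value_shift_digit (hb : t.2 ≠ 0) :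
    value Δ (shift t (digit Δ t)) = Int.fract (value Δ t) := by
  rw [value_shift hb, Int.fract]; rfl

lemma dvd_sub_shift_fst_sq (hdvd : 4 * t.2 ∣ Δ - t.1 ^ 2) (k : ℤ) :
    4 * t.2 ∣ Δ - (shift t k).1 ^ 2 := by
  have : Δ - (shift t k).1 ^ 2 = Δ - t.1 ^ 2 + 4 * t.2 * (k * t.1 - k ^ 2 * t.2) := by
    simp only [shift]; ring
  rw [this]
  exact dvd_add hdvd (dvd_mul_right _ _)

lemma four_mul_snd_mul_inv_snd (hdvd : 4 * t.2 ∣ Δ - t.1 ^ 2) :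
    4 * t.2 * (inv Δ t).2 = Δ - t.1 ^ 2 :=
  Int.mul_ediv_cancel' hdvd

lemma value_inv (hΔ : Irrational √(Δ : ℝ)) (hdvd : 4 * t.2 ∣ Δ - t.1 ^ 2) :
    value Δ (inv Δ t) = (value Δ t)⁻¹ := by
  have hs := sqrt_sq_of_irrational hΔ
  have hprod : (4 * t.2 * (inv Δ t).2 : ℝ) = Δ - t.1 ^ 2 := by
    exact_mod_cast four_mul_snd_mul_inv_snd hdvd
  have hne := sub_sq_ne_zero hΔ t.1
  refine eq_inv_of_mul_eq_one_left ?_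
  simp only [value, show (inv Δ t).1 = -t.1 from rfl]
  rw [div_mul_div_comm, div_eq_one_iff_eq]
  · push_cast; linear_combination hs - hprod
  · intro h; apply hne; rw [← hprod]; linear_combination h

lemma fract_value (hΔ : Irrational √(Δ : ℝ)) (hb : t.2 ≠ 0) (hdvd : 4 * t.2 ∣ Δ - t.1 ^ 2) :
    Int.fract (value Δ t) = (value Δ (step Δ t))⁻¹ := by
  rw [step, value_inv hΔ (dvd_sub_shift_fst_sq hdvd _), inv_inv, value_shift_digit hb]

lemma isReduced_inv (hΔ : Irrational √(Δ : ℝ)) (hb : 0 < t.2) (hdvd : 4 * t.2 ∣ Δ - t.1 ^ 2)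
    (h0 : 0 < t.1 + √(Δ : ℝ)) (h1 : t.1 + √(Δ : ℝ) < 2 * t.2)
    (hconj : 2 * t.2 < √(Δ : ℝ) - t.1) : IsReduced Δ (inv Δ t) := by
  have hs := sqrt_sq_of_irrational hΔ
  have hprod : (4 * t.2 * (inv Δ t).2 : ℝ) = Δ - t.1 ^ 2 := by
    exact_mod_cast four_mul_snd_mul_inv_snd hdvd
  have hbR : (0 : ℝ) < t.2 := by exact_mod_cast hb
  have hc : (0 : ℝ) < (inv Δ t).2 := by nlinarith
  refine ⟨by exact_mod_cast hc, ⟨t.2, ?_⟩, ?_, ?_, ?_⟩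
  · rw [show (inv Δ t).1 = -t.1 from rfl, neg_sq, ← four_mul_snd_mul_inv_snd hdvd]; ring
  all_goals simp only [show (inv Δ t).1 = -t.1 from rfl, Int.cast_neg]; nlinarith

lemma isReduced_step (hΔ : Irrational √(Δ : ℝ)) (hb : 0 < t.2) (hdvd : 4 * t.2 ∣ Δ - t.1 ^ 2)
    (hconj : 2 * t.2 < √(Δ : ℝ) - (shift t (digit Δ t)).1) : IsReduced Δ (step Δ t) := by
  have hbR : (0 : ℝ) < 2 * t.2 := by positivity
  have hirr := (irrational_value hΔ hb.ne').ne_int (digit Δ t)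
  refine isReduced_inv hΔ hb (dvd_sub_shift_fst_sq hdvd _) ?_ ?_ hconj
  · have h : 0 < value Δ (shift t (digit Δ t)) :=
      (value_shift_digit hb.ne').symm ▸ Int.fract_pos.2 hirr
    exact (div_pos_iff_of_pos_right hbR).1 h
  · have h : value Δ (shift t (digit Δ t)) < 1 :=
      (value_shift_digit hb.ne').symm ▸ Int.fract_lt_one _
    exact (div_lt_one hbR).1 h

lemma four_le_of_dvd_sub_sq (hΔ : Irrational √(Δ : ℝ)) {u : ℤ} (hdvd : 4 ∣ Δ - u ^ 2) :
    4 ≤ Δ := by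
  obtain ⟨hns, hΔ0⟩ := irrational_sqrt_intCast_iff.1 hΔ
  have h0 : Δ ≠ 0 := by rintro rfl; exact hns ⟨0, rfl⟩
  have h1 : Δ ≠ 1 := by rintro rfl; exact hns ⟨1, rfl⟩
  rcases Int.even_or_odd u with ⟨k, rfl⟩ | ⟨k, rfl⟩
  · have : (k + k) ^ 2 = 4 * k ^ 2 := by ring
    omega
  · have : (2 * k + 1) ^ 2 = 4 * (k ^ 2 + k) + 1 := by ring
    omega

lemma isReduced_step_of_snd_eq_one (hΔ : Irrational √(Δ : ℝ)) {u : ℤ}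
    (hdvd : 4 ∣ Δ - u ^ 2) : IsReduced Δ (step Δ (u, 1)) := by
  have hs : 2 ≤ √(Δ : ℝ) := Real.le_sqrt_of_sq_le <| by
    exact_mod_cast (by linarith [four_le_of_dvd_sub_sq hΔ hdvd] : (2 : ℤ) ^ 2 ≤ Δ)
  have hlt : value Δ (shift (u, 1) (digit Δ (u, 1))) < 1 :=
    value_shift_digit (t := (u, 1)) one_ne_zero ▸ Int.fract_lt_one _
  refine isReduced_step hΔ one_pos (by simpa using hdvd) ?_
  have := (div_lt_one (by norm_num : (0 : ℝ) < 2 * ((1 : ℤ) : ℝ))).1 hlt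
  simp only [shift] at this ⊢
  push_cast at this ⊢
  linarith

namespace IsReduced

lemma one_le_digit (ht : IsReduced Δ t) : 1 ≤ digit Δ t := by
  have hlt : 1 < value Δ t := (one_lt_div (by have := ht.snd_pos; positivity)).2 ht.two_mul_snd_lt
  exact Int.le_floor.2 (by exact_mod_cast hlt.le)

lemma isReduced_step (ht : IsReduced Δ t) (hΔ : Irrational √(Δ : ℝ)) :
    IsReduced Δ (step Δ t) := by
  refine QuadIrr.isReduced_step hΔ ht.snd_pos ht.dvd ?_
  have ha : (1 : ℝ) ≤ digit Δ t := by exact_mod_cast ht.one_le_digit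
  have hb : (0 : ℝ) < t.2 := by exact_mod_cast ht.snd_pos
  simp only [shift]
  push_cast
  nlinarith [ht.fst_lt]

lemma iterate_step (ht : IsReduced Δ t) (hΔ : Irrational √(Δ : ℝ)) (n : ℕ) :
    IsReduced Δ ((step Δ)^[n] t) := by
  induction n with
  | zero => exact ht
  | succ n ih => rw [iterate_succ_apply']; exact ih.isReduced_step hΔ

lemma gaussMap_iterate (ht : IsReduced Δ t) (hΔ : Irrational √(Δ : ℝ)) (n : ℕ) :
    gaussMap^[n] (value Δ t)⁻¹ = (value Δ ((step Δ)^[n] t))⁻¹ := by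
  induction n with
  | zero => rfl
  | succ n ih =>
    have htn := ht.iterate_step hΔ n
    rw [iterate_succ_apply', ih, iterate_succ_apply', gaussMap, one_div, inv_inv,
      fract_value hΔ htn.snd_pos.ne' htn.dvd]

lemma cfDigit_succ (ht : IsReduced Δ t) (hΔ : Irrational √(Δ : ℝ)) (n : ℕ) :
    cfDigit (n + 1) (value Δ t)⁻¹ = digit Δ ((step Δ)^[n] t) := by
  rw [cfDigit, Nat.add_sub_cancel, ht.gaussMap_iterate hΔ, one_div, inv_inv, digit]

lemma shift_injective {t' : ℤ × ℤ} (ht : IsReduced Δ t) (ht' : IsReduced Δ t') {k k' : ℤ}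
    (h : shift t k = shift t' k') : t = t' ∧ k = k' := by
  simp only [shift, Prod.mk.injEq] at h
  obtain ⟨hu, hb⟩ := h
  have hlt : t.1 - t'.1 < 2 * t.2 := by
    have := ht'.sqrt_sub_fst_lt
    rw [← hb] at this
    exact_mod_cast (by linarith [ht.fst_lt] : (t.1 - t'.1 : ℝ) < 2 * t.2)
  have hlt' : t'.1 - t.1 < 2 * t.2 := by
    have := ht'.fst_lt
    exact_mod_cast (by linarith [ht.sqrt_sub_fst_lt] : (t'.1 - t.1 : ℝ) < 2 * t.2)
  rw [← hb] at hu
  have hb0 := ht.snd_pos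
  obtain rfl : k = k' := by
    rcases lt_trichotomy k k' with h | h | h
    · nlinarith
    · exact h
    · nlinarith
  exact ⟨Prod.ext (by linarith) hb, rfl⟩

end IsReduced

lemma xPlus_eq_value (p q : ℤ) : xPlus p q = value (p ^ 2 + 4 * q) (-p, 1) := by
  simp only [xPlus, value]
  push_cast
  ring

/-- The triples `(u, a, b)` correspond to the forms `a x² + u x y - b y²` of discriminant `Δ`;
the box only makes the set visibly finite. -/
noncomputable def triples (Δ : ℤ) : Finset (ℤ × ℤ × ℤ) :=
  (Finset.Icc (-Δ) Δ ×ˢ Finset.Icc 1 Δ ×ˢ Finset.Icc 1 Δ).filter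
    fun t => t.1 ^ 2 + 4 * t.2.1 * t.2.2 = Δ

lemma mem_triples {t : ℤ × ℤ × ℤ} :
    t ∈ triples Δ ↔ t.1 ^ 2 + 4 * t.2.1 * t.2.2 = Δ ∧ 0 < t.2.1 ∧ 0 < t.2.2 := by
  simp only [triples, mem_filter, mem_product, Finset.mem_Icc]
  constructor
  · rintro ⟨⟨-, ⟨ha, -⟩, hb, -⟩, h⟩
    exact ⟨h, ha, hb⟩
  · rintro ⟨h, ha, hb⟩
    refine ⟨⟨⟨?_, ?_⟩, ⟨ha, ?_⟩, hb, ?_⟩, h⟩ <;>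
      nlinarith [sq_nonneg (t.1 + 1), sq_nonneg (t.1 - 1), mul_pos ha hb]

lemma eq_of_mem_triples {t t' : ℤ × ℤ × ℤ} (ht : t ∈ triples Δ) (ht' : t' ∈ triples Δ)
    (h1 : t.1 = t'.1) (h2 : t.2.1 = t'.2.1) : t = t' := by
  obtain ⟨h, ha, -⟩ := mem_triples.1 ht
  obtain ⟨h', -, -⟩ := mem_triples.1 ht'
  have : t.2.1 * t.2.2 = t.2.1 * t'.2.2 := by
    rw [h1] at h; rw [← h2] at h'; linarith
  exact Prod.ext h1 (Prod.ext h2 (mul_left_cancel₀ ha.ne' this))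

lemma two_mul_card_filter_le_card_triples :
    2 * #((triples Δ).filter fun t => 2 * t.2.2 < t.1 + √(Δ : ℝ)) ≤ #(triples Δ) := by
  have hsplit := card_filter_add_card_filter_not (s := triples Δ)
    fun t => 2 * t.2.2 < t.1 + √(Δ : ℝ)
  suffices #((triples Δ).filter fun t => 2 * t.2.2 < t.1 + √(Δ : ℝ)) ≤
      #((triples Δ).filter fun t => ¬ 2 * t.2.2 < t.1 + √(Δ : ℝ)) by
    omega
  refine card_le_card_of_injOn (fun t => (-t.1, t.2.2, t.2.1)) (fun t ht => ?_)
    fun t _ t' _ h => ?_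
  · simp only [coe_filter, Set.mem_ofPred_eq, mem_triples] at ht ⊢
    obtain ⟨⟨h, ha, hb⟩, hP⟩ := ht
    have hs : √(Δ : ℝ) ^ 2 = Δ := Real.sq_sqrt (by rw [← h]; positivity)
    have hR : ((t.1 : ℝ)) ^ 2 + 4 * t.2.1 * t.2.2 = Δ := by exact_mod_cast h
    refine ⟨⟨by rw [← h]; ring, hb, ha⟩, ?_⟩
    push_cast
    intro hlt
    nlinarith [mul_lt_mul'' hP hlt (by positivity) (by positivity)]
  · simp only [Prod.mk.injEq, neg_inj] at h
    exact Prod.ext h.1 (Prod.ext h.2.2 h.2.1)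

def triple (Δ : ℤ) (t : ℤ × ℤ) : ℤ × ℤ × ℤ := (t.1, (inv Δ t).2, t.2)

lemma IsReduced.triple_shift_mem (ht : IsReduced Δ t) (hΔ : Irrational √(Δ : ℝ)) {k : ℤ}
    (hk0 : 0 ≤ k) (hk : k < digit Δ t) :
    triple Δ (shift t k) ∈ (triples Δ).filter fun t => 2 * t.2.2 < t.1 + √(Δ : ℝ) := by
  have hb : (0 : ℝ) < t.2 := by exact_mod_cast ht.snd_pos
  have hs := sqrt_sq_of_irrational hΔ
  have hprod := four_mul_snd_mul_inv_snd (dvd_sub_shift_fst_sq ht.dvd k)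
  have hprodR : (4 * t.2 * (inv Δ (shift t k)).2 : ℝ) = Δ - (shift t k).1 ^ 2 := by
    exact_mod_cast hprod
  have hgt : 2 * t.2 < (shift t k).1 + √(Δ : ℝ) := by
    have hne : value Δ t ≠ digit Δ t := (irrational_value hΔ ht.snd_pos.ne').ne_int _
    have hle : (digit Δ t : ℝ) ≤ value Δ t := Int.floor_le _
    have hk' : (k : ℝ) + 1 ≤ digit Δ t := by exact_mod_cast hk
    have h1 : 1 < value Δ (shift t k) := by
      rw [value_shift ht.snd_pos.ne']
      linarith [lt_of_le_of_ne hle (Ne.symm hne)]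
    exact (one_lt_div (by positivity)).1 h1
  have hlt : ((shift t k).1 : ℝ) < √(Δ : ℝ) := by
    have : (0 : ℝ) ≤ k * t.2 := mul_nonneg (by exact_mod_cast hk0) hb.le
    simp only [shift]
    push_cast
    linarith [ht.fst_lt]
  have hc : (0 : ℝ) < (inv Δ (shift t k)).2 := by nlinarith
  rw [mem_filter, mem_triples]
  refine ⟨⟨?_, by exact_mod_cast hc, ht.snd_pos⟩, hgt⟩
  simp only [triple]
  linear_combination hprod

lemma two_mul_sum_digit_le_card_triples (hΔ : Irrational √(Δ : ℝ)) {S : Finset (ℤ × ℤ)}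
    (hS : ∀ t ∈ S, IsReduced Δ t) : 2 * ∑ t ∈ S, digit Δ t ≤ #(triples Δ) := by
  set src := S.sigma fun t => Ico 0 (digit Δ t)
  have hsrc : (#src : ℤ) = ∑ t ∈ S, digit Δ t := by
    rw [card_sigma, Nat.cast_sum]
    refine sum_congr rfl fun t ht => ?_
    rw [Int.card_Ico, sub_zero, Int.toNat_of_nonneg (by linarith [(hS t ht).one_le_digit])]
  have hle : #src ≤ #((triples Δ).filter fun t => 2 * t.2.2 < t.1 + √(Δ : ℝ)) := by
    refine card_le_card_of_injOn (fun x => triple Δ (shift x.1 x.2)) (fun x hx => ?_)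
      fun x hx x' hx' h => ?_
    · simp only [coe_sigma, Set.mem_sigma_iff, coe_Ico, Set.mem_Ico, src] at hx
      exact (hS x.1 hx.1).triple_shift_mem hΔ hx.2.1 hx.2.2
    · simp only [coe_sigma, Set.mem_sigma_iff, src] at hx hx'
      simp only [triple, Prod.mk.injEq] at h
      obtain ⟨ht, hk⟩ := (hS x.1 hx.1).shift_injective (hS x'.1 hx'.1) (Prod.ext h.1 h.2.2)
      exact Sigma.ext ht (heq_of_eq hk)
  rw [← hsrc]
  exact_mod_cast (Nat.mul_le_mul_left 2 hle).trans two_mul_card_filter_le_card_triples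

lemma even_fst_iff {t : ℤ × ℤ × ℤ} (ht : t ∈ triples Δ) : Even t.1 ↔ Δ % 4 = 0 := by
  obtain ⟨h, -, -⟩ := mem_triples.1 ht
  rcases Int.even_or_odd t.1 with ⟨k, hk⟩ | ⟨k, hk⟩
  · have : Δ = 4 * (k ^ 2 + t.2.1 * t.2.2) := by rw [← h, hk]; ring
    simp only [show Even t.1 from ⟨k, hk⟩, true_iff]
    omega
  · have : Δ = 4 * (k ^ 2 + k + t.2.1 * t.2.2) + 1 := by rw [← h, hk]; ring
    simp only [Int.not_even_iff_odd.2 ⟨k, hk⟩, false_iff]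
    omega

lemma toNat_mem_divisors {t : ℤ × ℤ × ℤ} (ht : t ∈ triples Δ) :
    t.2.1.toNat ∈ ((Δ - t.1 ^ 2) / 4).toNat.divisors := by
  obtain ⟨h, ha, hb⟩ := mem_triples.1 ht
  have hq : (Δ - t.1 ^ 2) / 4 = t.2.1 * t.2.2 := by
    rw [← h, add_sub_cancel_left, mul_assoc, Int.mul_ediv_cancel_left _ four_ne_zero]
  rw [hq, Int.toNat_mul ha.le hb.le, Nat.mem_divisors]
  exact ⟨dvd_mul_right _ _, Nat.mul_ne_zero (by omega) (by omega)⟩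

lemma card_filter_fst_eq_zero_le :
    #((triples Δ).filter (·.1 = 0)) ≤ (Δ / 4).toNat.divisors.card := by
  refine card_le_card_of_injOn (fun t => t.2.1.toNat) (fun t ht => ?_) fun t ht t' ht' h => ?_
  · simp only [coe_filter, Set.mem_ofPred_eq] at ht
    simpa [ht.2] using toNat_mem_divisors ht.1
  · simp only [coe_filter, Set.mem_ofPred_eq] at ht ht'
    refine eq_of_mem_triples ht.1 ht'.1 (ht.2.trans ht'.2.symm) ?_
    have := (mem_triples.1 ht.1).2.1
    have := (mem_triples.1 ht'.1).2.1
    simp only at h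
    omega

lemma card_filter_fst_ne_zero_le (J : Finset ℕ) (ι : ℤ → ℕ) (D : ℕ → ℕ)
    (hmem : ∀ t ∈ triples Δ, t.1 ≠ 0 → ι t.1 ∈ J ∧ D (ι t.1) = ((Δ - t.1 ^ 2) / 4).toNat)
    (hinj : ∀ t ∈ triples Δ, ∀ t' ∈ triples Δ, ι t.1 = ι t'.1 → t.1.natAbs = t'.1.natAbs) :
    #((triples Δ).filter (·.1 ≠ 0)) ≤ 2 * ∑ j ∈ J, (D j).divisors.card := by
  have htarget : #((univ : Finset Bool) ×ˢ J.sigma fun j => (D j).divisors) =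
      2 * ∑ j ∈ J, (D j).divisors.card := by
    rw [card_product, card_sigma, card_univ, Fintype.card_bool]
  rw [← htarget]
  refine card_le_card_of_injOn (fun t => (decide (t.1 < 0), ⟨ι t.1, t.2.1.toNat⟩))
    (fun t ht => ?_) fun t ht t' ht' h => ?_
  · simp only [coe_filter, Set.mem_ofPred_eq] at ht
    obtain ⟨hJ, hD⟩ := hmem t ht.1 ht.2
    simp only [coe_product, coe_univ, coe_sigma, Set.mem_prod, Set.mem_univ, Set.mem_sigma_iff,
      mem_coe, true_and]
    exact ⟨hJ, hD ▸ toNat_mem_divisors ht.1⟩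
  · simp only [coe_filter, Set.mem_ofPred_eq] at ht ht'
    simp only [Prod.mk.injEq, decide_eq_decide, Sigma.mk.inj_iff, heq_eq_eq] at h
    obtain ⟨hsign, hι, ha⟩ := h
    have habs := Int.natAbs_eq_natAbs_iff.1 (hinj t ht.1 t' ht'.1 hι)
    refine eq_of_mem_triples ht.1 ht'.1 (by omega) ?_
    have := (mem_triples.1 ht.1).2.1
    have := (mem_triples.1 ht'.1).2.1
    omega

lemma card_triples_le_of_emod_four_eq_zero (h4 : Δ % 4 = 0) :
    #(triples Δ) ≤ 2 * ∑ v ∈ Finset.Icc 1 (Nat.sqrt (Δ / 4).toNat),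
      ((Δ / 4).toNat - v ^ 2).divisors.card + (Δ / 4).toNat.divisors.card := by
  have hsplit := card_filter_add_card_filter_not (s := triples Δ) (·.1 = 0)
  have h0 := card_filter_fst_eq_zero_le (Δ := Δ)
  have h1 := card_filter_fst_ne_zero_le (Δ := Δ) (Finset.Icc 1 (Nat.sqrt (Δ / 4).toNat))
    (fun u => u.natAbs / 2) (fun v => (Δ / 4).toNat - v ^ 2) (fun t ht hu => ?_)
    (fun t ht t' ht' h => ?_)
  · simp only [ne_eq] at h1
    omega
  · obtain ⟨h, ha, hb⟩ := mem_triples.1 ht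
    obtain ⟨v, hv⟩ := (even_fst_iff ht).2 h4
    obtain ⟨N, hN⟩ : ∃ N : ℕ, v.natAbs ^ 2 = N := ⟨_, rfl⟩
    have hsq : t.1 ^ 2 = 4 * N := by
      rw [← hN, Nat.cast_pow, Int.natAbs_sq, hv]; ring
    have hΔ : Δ = 4 * N + 4 * (t.2.1 * t.2.2) := by rw [← h, hsq]; ring
    have hab : 0 < t.2.1 * t.2.2 := mul_pos ha hb
    rw [show t.1.natAbs / 2 = v.natAbs by omega, Finset.mem_Icc, Nat.le_sqrt', hN, hsq]
    omega
  · obtain ⟨k, hk⟩ := (even_fst_iff ht).2 h4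
    obtain ⟨k', hk'⟩ := (even_fst_iff ht').2 h4
    omega

lemma card_triples_le_of_emod_four_ne_zero (h4 : Δ % 4 ≠ 0) :
    #(triples Δ) ≤ 2 * ∑ j ∈ (Finset.range Δ.toNat).filter (fun j : ℕ => Odd j ∧ (j : ℤ) ^ 2 < Δ),
      ((Δ - (j : ℤ) ^ 2) / 4).toNat.divisors.card := by
  have hzero : (triples Δ).filter (·.1 ≠ 0) = triples Δ :=
    filter_true_of_mem fun t ht h0 => h4 ((even_fst_iff ht).1 (h0 ▸ Even.zero))
  rw [← hzero]
  refine card_filter_fst_ne_zero_le _ Int.natAbs _ (fun t ht _ => ?_) fun _ _ _ _ h => h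
  obtain ⟨h, ha, hb⟩ := mem_triples.1 ht
  have hodd : Odd t.1 := Int.not_even_iff_odd.1 fun he => h4 ((even_fst_iff ht).1 he)
  have hlt : t.1 ^ 2 < Δ := by nlinarith [mul_pos ha hb]
  have hle : (t.1.natAbs : ℤ) ≤ t.1 ^ 2 := by
    rw [← Int.natAbs_sq]; exact_mod_cast Nat.le_self_pow two_ne_zero _
  rw [mem_filter, Finset.mem_range, Int.natAbs_odd, Int.natAbs_sq]
  exact ⟨⟨by omega, hodd, hlt⟩, rfl⟩

lemma card_triples_le_fBound : (#(triples Δ) : ℤ) ≤ fBound Δ := by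
  unfold fBound
  split_ifs with h4
  · exact_mod_cast card_triples_le_of_emod_four_eq_zero h4
  · exact_mod_cast card_triples_le_of_emod_four_ne_zero h4

end QuadIrr

open QuadIrr in
theorem arnold_lemma3_odd_period_general (p q : ℤ)
    (hΔ : 0 < p ^ 2 + 4 * q) (hns : ¬ IsSquare (p ^ 2 + 4 * q)) :
    2 * periodSum p q ≤ fBound (p ^ 2 + 4 * q) := by
  set Δ := p ^ 2 + 4 * q
  have hirr : Irrational √(Δ : ℝ) := (irrational_sqrt_intCast_iff_of_nonneg hΔ.le).2 hns
  have hdvd : 4 ∣ Δ - (-p) ^ 2 := ⟨q, by simp only [Δ]; ring⟩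
  set t₀ := step Δ (-p, 1)
  have ht₀ : IsReduced Δ t₀ := isReduced_step_of_snd_eq_one hirr hdvd
  have hdig (n : ℕ) : cfDigit (n + 1) (Int.fract (xPlus p q)) = digit Δ ((step Δ)^[n] t₀) := by
    rw [xPlus_eq_value, fract_value hirr one_ne_zero (by simpa using hdvd), ht₀.cfDigit_succ hirr]
  have hinj : Set.InjOn (fun n => (step Δ)^[n] t₀) (Finset.range (period p q)) := by
    rw [coe_range]
    refine injOn_iterate_of_minimal_period (g := digit Δ) ?_ fun e he h => period_le he ?_
    · simpa only [hdig] using periodic_cfDigit_period p q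
    · simpa only [hdig] using h
  have hsum : periodSum p q =
      ∑ t ∈ (Finset.range (period p q)).image fun n => (step Δ)^[n] t₀, digit Δ t := by
    rw [sum_image hinj, periodSum, ← Finset.Ico_add_one_right_eq_Icc, sum_Ico_eq_sum_range,
      Nat.add_sub_cancel]
    exact sum_congr rfl fun n _ => by rw [add_comm, hdig]
  rw [hsum]
  refine (two_mul_sum_digit_le_card_triples hirr ?_).trans card_triples_le_fBound
  simp only [Finset.mem_image]
  rintro _ ⟨n, -, rfl⟩
  exact ht₀.iterate_step hirr n

/-- Improvement of Lemma 3 for odd period: if `Δ = p² + 4q` is positive and not a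
perfect square and the least period `T(p,q)` is odd, then
`2 Σ_{i=1}^{T(p,q)} a_i(frac (x₊(p,q))) ≤ f(Δ/4)`. -/
theorem arnold_lemma3_odd_period (p q : ℤ)
    (hΔ : 0 < p ^ 2 + 4 * q) (hns : ¬ IsSquare (p ^ 2 + 4 * q))
    (hT : Odd (period p q)) :
    2 * periodSum p q ≤ fBound (p ^ 2 + 4 * q) :=
  arnold_lemma3_odd_period_general p q hΔ hns
end

section
/- Let p, q be integers and let Q(u,v) = v² + p·u·v − q·u² be the associated binary quadratic form on ℤ². Let e = (u₁,v₁) and f = (u₂,v₂) be integer vectors with u₁·v₂ − u₂·v₁ = ±1 (so that e, f form a basis of the lattice ℤ²). Put a = Q(e), b = Q(f), and h = Q(e+f) − a − b. Then Q(e−f) = a + b − h (so the values Q(e−f), a+b, Q(e+f) form an arithmetic progression with common difference h), and h² − 4·a·b = p² + 4q. (Equation (8): the arithmetic progression rule for superbases, with h²/4 − ab = Δ/4.) -/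
/-!
The first identity is the parallelogram law for a quadratic form. For the second, `h` is the
value `B(e, f)` of the associated bilinear form, and `h² − 4ab` is minus the determinant of the
Gram matrix of `e, f`; changing basis multiplies that determinant by `(u₁v₂ − u₂v₁)²`, so for a
basis of `ℤ²` it equals the discriminant `p² + 4q` of `Q` itself.
-/

/-- The binary quadratic form `Q(u,v) = v² + p·u·v − q·u²` associated with the
equation `x² + p x = q`. -/
def quadForm (p q u v : ℤ) : ℤ := v ^ 2 + p * u * v - q * u ^ 2

theorem quadForm_sub_add_quadForm_add (p q u₁ v₁ u₂ v₂ : ℤ) :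
    quadForm p q (u₁ - u₂) (v₁ - v₂) + quadForm p q (u₁ + u₂) (v₁ + v₂) =
      2 * (quadForm p q u₁ v₁ + quadForm p q u₂ v₂) := by
  unfold quadForm
  ring

theorem polar_sq_sub_four_mul_quadForm (p q u₁ v₁ u₂ v₂ : ℤ) :
    (quadForm p q (u₁ + u₂) (v₁ + v₂) - quadForm p q u₁ v₁ - quadForm p q u₂ v₂) ^ 2 -
        4 * quadForm p q u₁ v₁ * quadForm p q u₂ v₂ =
      (p ^ 2 + 4 * q) * (u₁ * v₂ - u₂ * v₁) ^ 2 := by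
  unfold quadForm
  ring

/-- Equation (8), the arithmetic progression rule for superbases: if `e = (u₁,v₁)` and
`f = (u₂,v₂)` form a basis of `ℤ²` (determinant `±1`), `a = Q(e)`, `b = Q(f)` and
`h = Q(e+f) − a − b`, then `Q(e−f) = a + b − h` (so `Q(e−f), a+b, Q(e+f)` is an
arithmetic progression with common difference `h`) and `h² − 4ab = p² + 4q`. -/
theorem arnold_progression_rule (p q u₁ v₁ u₂ v₂ : ℤ)
    (hdet : u₁ * v₂ - u₂ * v₁ = 1 ∨ u₁ * v₂ - u₂ * v₁ = -1) :
    quadForm p q (u₁ - u₂) (v₁ - v₂) =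
        quadForm p q u₁ v₁ + quadForm p q u₂ v₂ -
          (quadForm p q (u₁ + u₂) (v₁ + v₂) - quadForm p q u₁ v₁ - quadForm p q u₂ v₂) ∧
      (quadForm p q (u₁ + u₂) (v₁ + v₂) - quadForm p q u₁ v₁ - quadForm p q u₂ v₂) ^ 2 -
          4 * quadForm p q u₁ v₁ * quadForm p q u₂ v₂ = p ^ 2 + 4 * q := by
  refine ⟨by linarith [quadForm_sub_add_quadForm_add p q u₁ v₁ u₂ v₂], ?_⟩
  rw [polar_sq_sub_four_mul_quadForm, Int.isUnit_sq (Int.isUnit_iff.mpr hdet), mul_one]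
end
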